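/- (Finite blocklength upper bound.) Let P be a probability distribution on a countable set S, let a > 0 and η ≥ 1 be real numbers, let ε ∈ [0,1), and let A ⊆ S satisfy P(A) ≥ 1 − ε. Then there exist an encoder φ : S → 𝒰* and a decoder ψ : 𝒰* → S such that P{x : ψ(φ(x)) ≠ x} ≤ ε and P{x : l(φ(x)) > η} ≤ P{x ∈ A : a·P({x}) ≤ K^{−η}·P(A)} + a·K. -/

import Mathlib

open Filter MeasureTheory

namespace NY

/-- A probability distribution on a set, given by its point mass function. -/
structure Dist (α : Type*) where
  p : α → ℝ
  nonneg : ∀ x, 0 ≤ p x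
  hasSum : HasSum p 1

/-- The probability of a set under a distribution. -/
noncomputable def Dist.pr {α : Type*} (P : Dist α) (A : Set α) : ℝ := ∑' x : A, P.p x.1

/-- 𝒰* : nonempty finite strings over the code alphabet 𝒰 = {1,…,K}. -/
abbrev Word (K : ℕ) := {u : List (Fin K) // u ≠ []}

/-- Length of a string, as a real number. -/
noncomputable def wlen {K : ℕ} (u : Word K) : ℝ := u.1.length

/-- Error probability of a variable-length code (φ, ψ). -/
noncomputable def errP {α : Type*} {K : ℕ} (P : Dist α) (φ : α → Word K) (ψ : Word K → α) : ℝ :=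
  P.pr {x | ψ (φ x) ≠ x}

/-- Overflow probability of an encoder φ with threshold η. -/
noncomputable def ovP {α : Type*} {K : ℕ} (P : Dist α) (φ : α → Word K) (η : ℝ) : ℝ :=
  P.pr {x | wlen (φ x) > η}

/-- A general source: for each blocklength n, a distribution on 𝒳^n. -/
abbrev Source (𝒳 : Type*) := (n : ℕ) → Dist (Fin n → 𝒳)

/-- The limit as ν ↓ 0 of a function g which is nonincreasing in ν
(the limit exists by monotonicity and equals the supremum over ν > 0). -/
noncomputable def limNu (g : ℝ → ℝ) : ℝ := sSup (g '' Set.Ioi (0 : ℝ))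

variable {𝒳 : Type*}

/-- A rate R ≥ 0 is (ε,δ)-achievable. -/
def FirstAch (K : ℕ) (X : Source 𝒳) (ε δ R : ℝ) : Prop :=
  0 ≤ R ∧ ∃ (φ : ∀ n, (Fin n → 𝒳) → Word K) (ψ : ∀ n, Word K → (Fin n → 𝒳)),
    limsup (fun n => errP (X n) (φ n) (ψ n)) atTop ≤ ε ∧
    limsup (fun n => ovP (X n) (φ n) ((n : ℝ) * R)) atTop ≤ δ

/-- The first-order (ε,δ)-optimum threshold R(ε,δ|X). -/
noncomputable def Ropt (K : ℕ) (X : Source 𝒳) (ε δ : ℝ) : ℝ :=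
  sInf {R | FirstAch K X ε δ R}

/-- L is (ε,δ,R)-achievable (second order). -/
def SecondAch (K : ℕ) (X : Source 𝒳) (ε δ R L : ℝ) : Prop :=
  ∃ (φ : ∀ n, (Fin n → 𝒳) → Word K) (ψ : ∀ n, Word K → (Fin n → 𝒳)),
    limsup (fun n => errP (X n) (φ n) (ψ n)) atTop ≤ ε ∧
    limsup (fun n => ovP (X n) (φ n) ((n : ℝ) * R + Real.sqrt (n : ℝ) * L)) atTop ≤ δ

/-- The second-order (ε,δ,R)-optimum threshold L(ε,δ,R|X). -/
noncomputable def Lopt (K : ℕ) (X : Source 𝒳) (ε δ R : ℝ) : ℝ :=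
  sInf {L | SecondAch K X ε δ R L}

/-- A rate R ≥ 0 is optimistically (ε,δ)-achievable. -/
def OptFirstAch (K : ℕ) (X : Source 𝒳) (ε δ R : ℝ) : Prop :=
  0 ≤ R ∧ ∃ (φ : ∀ n, (Fin n → 𝒳) → Word K) (ψ : ∀ n, Word K → (Fin n → 𝒳)),
    ∀ γ > (0 : ℝ), ∃ ns : ℕ → ℕ, StrictMono ns ∧ ∀ i,
      errP (X (ns i)) (φ (ns i)) (ψ (ns i)) ≤ ε + γ ∧
      ovP (X (ns i)) (φ (ns i)) ((ns i : ℝ) * R) ≤ δ + γ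

/-- The optimistic first-order (ε,δ)-optimum threshold R*(ε,δ|X). -/
noncomputable def RoptStar (K : ℕ) (X : Source 𝒳) (ε δ : ℝ) : ℝ :=
  sInf {R | OptFirstAch K X ε δ R}

/-- L is optimistically (ε,δ,R)-achievable. -/
def OptSecondAch (K : ℕ) (X : Source 𝒳) (ε δ R L : ℝ) : Prop :=
  ∃ (φ : ∀ n, (Fin n → 𝒳) → Word K) (ψ : ∀ n, Word K → (Fin n → 𝒳)),
    ∀ γ > (0 : ℝ), ∃ ns : ℕ → ℕ, StrictMono ns ∧ ∀ i,
      errP (X (ns i)) (φ (ns i)) (ψ (ns i)) ≤ ε + γ ∧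
      ovP (X (ns i)) (φ (ns i)) ((ns i : ℝ) * R + Real.sqrt (ns i : ℝ) * L) ≤ δ + γ

/-- The optimistic second-order (ε,δ,R)-optimum threshold L*(ε,δ,R|X). -/
noncomputable def LoptStar (K : ℕ) (X : Source 𝒳) (ε δ R : ℝ) : ℝ :=
  sInf {L | OptSecondAch K X ε δ R L}

/-- A rate R ≥ 0 is type I (ε,δ)-achievable. -/
def TypeIAch (K : ℕ) (X : Source 𝒳) (ε δ R : ℝ) : Prop :=
  0 ≤ R ∧ ∃ (φ : ∀ n, (Fin n → 𝒳) → Word K) (ψ : ∀ n, Word K → (Fin n → 𝒳)),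
    limsup (fun n => errP (X n) (φ n) (ψ n)) atTop ≤ ε ∧
    liminf (fun n => ovP (X n) (φ n) ((n : ℝ) * R)) atTop ≤ δ

/-- R†(ε,δ|X). -/
noncomputable def Rdagger (K : ℕ) (X : Source 𝒳) (ε δ : ℝ) : ℝ :=
  sInf {R | TypeIAch K X ε δ R}

/-- A rate R ≥ 0 is type II (ε,δ)-achievable. -/
def TypeIIAch (K : ℕ) (X : Source 𝒳) (ε δ R : ℝ) : Prop :=
  0 ≤ R ∧ ∃ (φ : ∀ n, (Fin n → 𝒳) → Word K) (ψ : ∀ n, Word K → (Fin n → 𝒳)),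
    liminf (fun n => errP (X n) (φ n) (ψ n)) atTop ≤ ε ∧
    limsup (fun n => ovP (X n) (φ n) ((n : ℝ) * R)) atTop ≤ δ

/-- R‡(ε,δ|X). -/
noncomputable def Rddagger (K : ℕ) (X : Source 𝒳) (ε δ : ℝ) : ℝ :=
  sInf {R | TypeIIAch K X ε δ R}

/-- H̄_γ(X) := inf{ R : limsup_n Pr{ (1/n) log(1/P_{X^n}(X^n)) > R } ≤ γ }. -/
noncomputable def Hbar (K : ℕ) (X : Source 𝒳) (γ : ℝ) : ℝ :=
  sInf {R | limsup (fun n =>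
    (X n).pr {x | Real.logb (K : ℝ) (1 / (X n).p x) / (n : ℝ) > R}) atTop ≤ γ}

/-- H̄*_γ(X) (optimistic version, with liminf). -/
noncomputable def HbarStar (K : ℕ) (X : Source 𝒳) (γ : ℝ) : ℝ :=
  sInf {R | liminf (fun n =>
    (X n).pr {x | Real.logb (K : ℝ) (1 / (X n).p x) / (n : ℝ) > R}) atTop ≤ γ}

/-- H̄_γ(R|X) := inf{ L : limsup_n Pr{ (1/n) log(1/P_{X^n}(X^n)) > R + L/√n } ≤ γ }. -/
noncomputable def Hbar2 (K : ℕ) (X : Source 𝒳) (γ R : ℝ) : ℝ :=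
  sInf {L | limsup (fun n =>
    (X n).pr {x | Real.logb (K : ℝ) (1 / (X n).p x) / (n : ℝ)
      > R + L / Real.sqrt (n : ℝ)}) atTop ≤ γ}

/-- H̄*_γ(R|X) (optimistic version, with liminf). -/
noncomputable def Hbar2Star (K : ℕ) (X : Source 𝒳) (γ R : ℝ) : ℝ :=
  sInf {L | liminf (fun n =>
    (X n).pr {x | Real.logb (K : ℝ) (1 / (X n).p x) / (n : ℝ)
      > R + L / Real.sqrt (n : ℝ)}) atTop ≤ γ}

/-- F(ε,R) := limsup_n inf_{A : Pr(A) ≥ 1−ε} Pr{ −(1/n) log P_{X^n}(X^n) ≥ R, X^n ∈ A }. -/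
noncomputable def Fspec (K : ℕ) (X : Source 𝒳) (ε R : ℝ) : ℝ :=
  limsup (fun n =>
    sInf ((fun A : Set (Fin n → 𝒳) =>
        (X n).pr (A ∩ {x | -Real.logb (K : ℝ) ((X n).p x) / (n : ℝ) ≥ R})) ''
      {A | (X n).pr A ≥ 1 - ε})) atTop

/-- H̃_{ε,δ}(X) := inf{ R : F(ε,R) ≤ δ }. -/
noncomputable def Htilde (K : ℕ) (X : Source 𝒳) (ε δ : ℝ) : ℝ :=
  sInf {R | Fspec K X ε R ≤ δ}

/-- G_{ε,δ}(X). -/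
noncomputable def Gfirst (K : ℕ) (X : Source 𝒳) (ε δ : ℝ) : ℝ :=
  sInf {R | limNu (fun ν => limsup (fun n =>
    sInf ((fun A : Set (Fin n → 𝒳) =>
        (X n).pr (A ∩ {x | -Real.logb (K : ℝ) ((X n).p x / (X n).pr A) / (n : ℝ) ≥ R})) ''
      {A | (X n).pr A ≥ 1 - ε - ν})) atTop) ≤ δ}

/-- G*_{ε,δ}(X) (optimistic version, with liminf). -/
noncomputable def GfirstStar (K : ℕ) (X : Source 𝒳) (ε δ : ℝ) : ℝ :=
  sInf {R | limNu (fun ν => liminf (fun n =>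
    sInf ((fun A : Set (Fin n → 𝒳) =>
        (X n).pr (A ∩ {x | -Real.logb (K : ℝ) ((X n).p x / (X n).pr A) / (n : ℝ) ≥ R})) ''
      {A | (X n).pr A ≥ 1 - ε - ν})) atTop) ≤ δ}

/-- G_{ε,δ}(R|X). -/
noncomputable def Gsecond (K : ℕ) (X : Source 𝒳) (ε δ R : ℝ) : ℝ :=
  sInf {L | limNu (fun ν => limsup (fun n =>
    sInf ((fun A : Set (Fin n → 𝒳) =>
        (X n).pr (A ∩ {x | -Real.logb (K : ℝ) ((X n).p x / (X n).pr A) / (n : ℝ)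
          ≥ R + L / Real.sqrt (n : ℝ)})) ''
      {A | (X n).pr A ≥ 1 - ε - ν})) atTop) ≤ δ}

/-- G*_{ε,δ}(R|X) (optimistic version, with liminf). -/
noncomputable def GsecondStar (K : ℕ) (X : Source 𝒳) (ε δ R : ℝ) : ℝ :=
  sInf {L | limNu (fun ν => liminf (fun n =>
    sInf ((fun A : Set (Fin n → 𝒳) =>
        (X n).pr (A ∩ {x | -Real.logb (K : ℝ) ((X n).p x / (X n).pr A) / (n : ℝ)
          ≥ R + L / Real.sqrt (n : ℝ)})) ''
      {A | (X n).pr A ≥ 1 - ε - ν})) atTop) ≤ δ}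

/-- A rate R is optimistically ε-achievable by fixed-length codes. -/
def FixAchR (K : ℕ) (X : Source 𝒳) (ε R : ℝ) : Prop :=
  ∃ (M : ℕ → ℕ) (φ : ∀ n, (Fin n → 𝒳) → Fin (M n)) (ψ : ∀ n, Fin (M n) → (Fin n → 𝒳)),
    ∀ γ > (0 : ℝ), ∃ ns : ℕ → ℕ, StrictMono ns ∧ ∀ i,
      (X (ns i)).pr {x | ψ (ns i) (φ (ns i) x) ≠ x} ≤ ε + γ ∧
      Real.logb (K : ℝ) (M (ns i) : ℝ) / (ns i : ℝ) ≤ R + γ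

/-- R^f(ε|X). -/
noncomputable def Rfix (K : ℕ) (X : Source 𝒳) (ε : ℝ) : ℝ :=
  sInf {R | FixAchR K X ε R}

/-- A real L is optimistically (ε,R)-achievable by fixed-length codes. -/
def FixAchL (K : ℕ) (X : Source 𝒳) (ε R L : ℝ) : Prop :=
  ∃ (M : ℕ → ℕ) (φ : ∀ n, (Fin n → 𝒳) → Fin (M n)) (ψ : ∀ n, Fin (M n) → (Fin n → 𝒳)),
    ∀ γ > (0 : ℝ), ∃ ns : ℕ → ℕ, StrictMono ns ∧ ∀ i,
      (X (ns i)).pr {x | ψ (ns i) (φ (ns i) x) ≠ x} ≤ ε + γ ∧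
      Real.logb (K : ℝ) ((M (ns i) : ℝ) / (K : ℝ) ^ ((ns i : ℝ) * R)) / Real.sqrt (ns i : ℝ)
        ≤ L + γ

/-- L^f(ε,R|X). -/
noncomputable def Lfix (K : ℕ) (X : Source 𝒳) (ε R : ℝ) : ℝ :=
  sInf {L | FixAchL K X ε R L}

/-! Let `m = ⌊η⌋`. At most `K ^ m` atoms have mass `> K ^ (-m)`: give them distinct words of
length `m`, and the other atoms of `A` distinct words longer than `η`. Decoding is exact on `A`,
so the error is at most `P(Aᶜ) ≤ ε`, and an overflow happens only at atoms `x ∈ A` with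
`P(x) ≤ K ^ (-m)`. Those with `a P(x) ≤ K ^ (-η) P(A)` make up the first term; there are at most
`a K ^ η` of the others, so they carry at most `a K ^ η K ^ (-m) ≤ a K`. -/

namespace Dist

variable {α : Type*} (P : Dist α)

lemma summable : Summable P.p := P.hasSum.summable

lemma nonempty (P : Dist α) : Nonempty α := by
  by_contra h
  rw [not_nonempty_iff] at h
  exact one_ne_zero (P.hasSum.unique hasSum_empty)

lemma pr_eq_tsum_indicator (A : Set α) : P.pr A = ∑' x, A.indicator P.p x :=
  tsum_subtype A P.p

lemma pr_mono {A B : Set α} (h : A ⊆ B) : P.pr A ≤ P.pr B := by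
  rw [P.pr_eq_tsum_indicator, P.pr_eq_tsum_indicator]
  exact Summable.tsum_le_tsum (Set.indicator_le_indicator_of_subset h P.nonneg)
    (P.summable.indicator A) (P.summable.indicator B)

lemma pr_union_le (A B : Set α) : P.pr (A ∪ B) ≤ P.pr A + P.pr B := by
  simp only [P.pr_eq_tsum_indicator]
  rw [← (P.summable.indicator A).tsum_add (P.summable.indicator B)]
  refine Summable.tsum_le_tsum (fun x => ?_)
    (P.summable.indicator _) ((P.summable.indicator A).add (P.summable.indicator B))
  have := Set.indicator_union_add_inter_apply P.p A B x
  have := Set.indicator_nonneg (fun y _ => P.nonneg y) (s := A ∩ B) x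
  linarith

lemma pr_compl (A : Set α) : P.pr Aᶜ = 1 - P.pr A := by
  rw [eq_sub_iff_add_eq', Dist.pr, Dist.pr,
    P.summable.tsum_subtype_add_tsum_subtype_compl A, P.hasSum.tsum_eq]

lemma pr_le_one (A : Set α) : P.pr A ≤ 1 := by
  simpa [Dist.pr, P.hasSum.tsum_eq] using P.summable.tsum_subtype_le P.p A P.nonneg

lemma pr_finset (F : Finset α) : P.pr ↑F = ∑ x ∈ F, P.p x :=
  F.tsum_subtype P.p

lemma finite_setOf_le {t : ℝ} (ht : 0 < t) : {x | t ≤ P.p x}.Finite := by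
  exact (Filter.eventually_cofinite.mp
    (P.summable.tendsto_cofinite_zero.eventually_lt_const ht)).subset fun _ hx => not_lt.mpr hx

lemma card_mul_le_pr (F : Finset α) {t : ℝ} (h : ∀ x ∈ F, t ≤ P.p x) :
    (F.card : ℝ) * t ≤ P.pr F := by
  rw [P.pr_finset, ← nsmul_eq_mul]
  exact F.card_nsmul_le_sum _ _ h

lemma pr_le_card_mul (F : Finset α) {s : ℝ} (h : ∀ x ∈ F, P.p x ≤ s) :
    P.pr F ≤ F.card * s := by
  rw [P.pr_finset, ← nsmul_eq_mul]
  exact F.sum_le_card_nsmul _ _ h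

lemma encard_setOf_inv_lt_le {n : ℕ} (hn : n ≠ 0) : {x | (n : ℝ)⁻¹ < P.p x}.encard ≤ n := by
  have hfin := (P.finite_setOf_le (t := (n : ℝ)⁻¹) (by positivity)).subset
    fun x (hx : (n : ℝ)⁻¹ < P.p x) => (hx.le : (n : ℝ)⁻¹ ≤ P.p x)
  lift {x | (n : ℝ)⁻¹ < P.p x} to Finset α using hfin with F hF
  have hF1 : (F.card : ℝ) * (n : ℝ)⁻¹ ≤ 1 :=
    (P.card_mul_le_pr F fun x hx => (hF.subset hx : (n : ℝ)⁻¹ < P.p x).le).trans (P.pr_le_one _)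
  rw [mul_inv_le_iff₀ (by positivity), one_mul] at hF1
  simpa using hF1

/-- At most `P(B) / t` atoms of `B` have mass `≥ t`, and each atom of `F` has mass `≤ s`. -/
lemma mul_pr_le_mul_pr {F B : Set α} (hFB : F ⊆ B) {t s : ℝ} (ht : 0 < t) (hs : 0 ≤ s)
    (hF : ∀ x ∈ F, t ≤ P.p x ∧ P.p x ≤ s) : t * P.pr F ≤ s * P.pr B := by
  lift F to Finset α using (P.finite_setOf_le ht).subset fun x hx => (hF x hx).1
  calc t * P.pr F ≤ t * (F.card * s) := by
        gcongr; exact P.pr_le_card_mul F fun x hx => (hF x hx).2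
    _ = s * (F.card * t) := by ring
    _ ≤ s * P.pr B := by
        gcongr; exact (P.card_mul_le_pr F fun x hx => (hF x hx).1).trans (P.pr_mono hFB)

lemma pr_inter_heavy_light_le {K a η : ℝ} (hK : 1 ≤ K) (ha : 0 < a) {A : Set α}
    (hA : 0 < P.pr A) {m : ℕ} (hηm : η ≤ m + 1) :
    P.pr (A ∩ {x | K ^ (-η) * P.pr A ≤ a * P.p x ∧ P.p x ≤ (K ^ m)⁻¹}) ≤ a * K := by
  have hK0 : 0 < K := by linarith
  set F := A ∩ {x | K ^ (-η) * P.pr A ≤ a * P.p x ∧ P.p x ≤ (K ^ m)⁻¹}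
  have key : K ^ (-η) * P.pr A / a * P.pr F ≤ (K ^ m)⁻¹ * P.pr A :=
    P.mul_pr_le_mul_pr Set.inter_subset_left (by positivity) (by positivity) fun x hx =>
      ⟨(div_le_iff₀' ha).mpr hx.2.1, hx.2.2⟩
  have hKη : K ^ η ≤ K ^ m * K := by
    calc K ^ η ≤ K ^ ((m : ℝ) + 1) := Real.rpow_le_rpow_of_exponent_le hK hηm
      _ = K ^ m * K := by rw [Real.rpow_add_one hK0.ne', Real.rpow_natCast]
  rw [Real.rpow_neg hK0.le] at key
  field_simp at key
  refine le_of_mul_le_mul_right ?_ (pow_pos hK0 m)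
  calc P.pr F * K ^ m ≤ K ^ η * a := key
    _ ≤ K ^ m * K * a := by gcongr
    _ = a * K * K ^ m := by ring

end Dist

def Word.ofFn {K n : ℕ} (hn : n ≠ 0) (f : Fin n → Fin K) : Word K :=
  ⟨List.ofFn f, by simpa using hn⟩

lemma wlen_ofFn {K n : ℕ} (hn : n ≠ 0) (f : Fin n → Fin K) : wlen (Word.ofFn hn f) = n := by
  simp [wlen, Word.ofFn]

lemma Word.ofFn_injective {K n : ℕ} (hn : n ≠ 0) : Function.Injective (Word.ofFn (K := K) hn) :=
  fun _ _ h => List.ofFn_injective (congrArg Subtype.val h)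

theorem exists_code {S : Type*} [Countable S] [Nonempty S] {K : ℕ} [NeZero K] {m : ℕ}
    (hm : m ≠ 0) (A D : Set S) (hD : D.encard ≤ (K ^ m : ℕ)) :
    ∃ (φ : S → Word K) (ψ : Word K → S),
      (∀ x ∈ A, ψ (φ x) = x) ∧ ∀ x, x ∉ A \ D → wlen (φ x) = m := by
  classical
  -- Atoms of `D` get distinct words of length `m`, the other atoms of `A \ D` words of pairwise
  -- distinct lengths `> m`.
  obtain ⟨ι, hι⟩ := Countable.exists_injective_nat S
  obtain ⟨f, -, hf⟩ := (Set.finite_of_encard_le_coe hD).exists_injOn_of_encard_le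
    (t := (Set.univ : Set (Fin m → Fin K))) (by simpa [Set.encard_univ] using hD)
  let short (x : S) : Word K := Word.ofFn hm (f x)
  let long (x : S) : Word K := Word.ofFn (n := m + 1 + ι x) (by omega) fun _ => 0
  have hlong : ∀ x, wlen (long x) = m + 1 + ι x := fun x => by simp [long, wlen_ofFn]
  let φ := (A \ D).piecewise long short
  have hφ : Set.InjOn φ A := by
    rw [← Set.inter_union_sdiff A D, Set.injOn_union Set.disjoint_sdiff_inter.symm]
    have hshort : ∀ x ∈ A ∩ D, φ x = short x := fun x hx =>
      Set.piecewise_eq_of_notMem _ _ _ fun h => h.2 hx.2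
    have hlong' : ∀ x ∈ A \ D, φ x = long x := fun x hx => Set.piecewise_eq_of_mem _ _ _ hx
    refine ⟨fun x hx y hy hxy => ?_, fun x hx y hy hxy => ?_, fun x hx y hy hxy => ?_⟩
    · rw [hshort x hx, hshort y hy] at hxy
      exact hf hx.2 hy.2 (Word.ofFn_injective hm hxy)
    · rw [hlong' x hx, hlong' y hy] at hxy
      have := congrArg wlen hxy
      simp only [hlong] at this
      exact hι (by exact_mod_cast add_left_cancel this)
    · rw [hshort x hx, hlong' y hy] at hxy
      have := congrArg wlen hxy
      simp only [short, wlen_ofFn, hlong] at this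
      linarith
  refine ⟨φ, Function.invFunOn φ A, fun x hx => hφ.leftInvOn_invFunOn hx, fun x hx => ?_⟩
  simp [φ, hx, short, wlen_ofFn]

theorem statement1_general {S : Type*} [Countable S] (K : ℕ) (hK : 2 ≤ K)
    (P : Dist S) (a η ε : ℝ) (ha : 0 < a) (hη : 1 ≤ η) (hε1 : ε < 1)
    (A : Set S) (hA : P.pr A ≥ 1 - ε) :
    ∃ (φ : S → Word K) (ψ : Word K → S),
      P.pr {x | ψ (φ x) ≠ x} ≤ ε ∧
      P.pr {x | wlen (φ x) > η} ≤
        P.pr (A ∩ {x | a * P.p x ≤ (K : ℝ) ^ (-η) * P.pr A}) + a * K := by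
  have := P.nonempty
  have : NeZero K := ⟨by omega⟩
  set m := ⌊η⌋₊
  have hm : m ≠ 0 := Nat.one_le_iff_ne_zero.mp ((Nat.one_le_floor_iff η).mpr hη)
  have hmη : (m : ℝ) ≤ η := Nat.floor_le (by linarith)
  obtain ⟨φ, ψ, hdec, hlen⟩ := exists_code hm A {x | ((K ^ m : ℕ) : ℝ)⁻¹ < P.p x}
    (P.encard_setOf_inv_lt_le (pow_ne_zero m (NeZero.ne K)))
  refine ⟨φ, ψ, ?_, ?_⟩
  · calc P.pr {x | ψ (φ x) ≠ x} ≤ P.pr Aᶜ := P.pr_mono fun x hx hxA => hx (hdec x hxA)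
      _ ≤ ε := by rw [P.pr_compl]; linarith
  · set c := (K : ℝ) ^ (-η) * P.pr A
    have hover : {x | wlen (φ x) > η} ⊆ A ∩ {x | a * P.p x ≤ c} ∪
        A ∩ {x | c ≤ a * P.p x ∧ P.p x ≤ ((K : ℝ) ^ m)⁻¹} := by
      intro x (hx : wlen (φ x) > η)
      obtain ⟨hxA, hxD⟩ : x ∈ A \ {x | ((K ^ m : ℕ) : ℝ)⁻¹ < P.p x} := by
        by_contra h
        linarith [hlen x h]
      push_cast at hxD
      rcases le_total (a * P.p x) c with h | h
      · exact Or.inl ⟨hxA, h⟩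
      · exact Or.inr ⟨hxA, h, not_lt.mp hxD⟩
    refine (P.pr_mono hover).trans <| (P.pr_union_le _ _).trans ?_
    gcongr
    exact P.pr_inter_heavy_light_le (by exact_mod_cast (by omega : 1 ≤ K)) ha (by linarith)
      (by linarith [Nat.lt_floor_add_one η])

/-- finite blocklength upper bound. -/
theorem statement1 {S : Type*} [Countable S] (K : ℕ) (hK : 2 ≤ K)
    (P : Dist S) (a η ε : ℝ) (ha : 0 < a) (hη : 1 ≤ η) (hε0 : 0 ≤ ε) (hε1 : ε < 1)
    (A : Set S) (hA : P.pr A ≥ 1 - ε) :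
    ∃ (φ : S → Word K) (ψ : Word K → S),
      P.pr {x | ψ (φ x) ≠ x} ≤ ε ∧
      P.pr {x | wlen (φ x) > η} ≤
        P.pr (A ∩ {x | a * P.p x ≤ (K : ℝ) ^ (-η) * P.pr A}) + a * K :=
  statement1_general K hK P a η ε ha hη hε1 A hA

end NY
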